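/- For every natural number n and all integers t and m, 220·∑_{j=1}^n (−1)^{j−1}·G_{j+t−1}·G_{j+t}·G_{j+t+1}·G_{j+t+2}·G_{j+t+m} = −(F_{m+2} − F_{m−3})·(−((−1)^{n+1}·G_{n+t+3}^5 + G_{t+3}^5) + 9·((−1)^{n+1}·G_{n+t+2}^5 + G_{t+2}^5)) − (F_{m+2} − F_{m−3})·(31·((−1)^{n+1}·G_{n+t+1}^5 + G_{t+1}^5) − 47·((−1)^{n+1}·G_{n+t}^5 + G_t^5)) − (F_{m+2} − F_{m−3})·(7·((−1)^{n+1}·G_{n+t−1}^5 + G_{t−1}^5) + ((−1)^{n+1}·G_{n+t−2}^5 + G_{t−2}^5)) + 44·λ²·(F_{m+2} − F_{m−3})·((−1)^{n+1}·G_{n+t−1} + G_{t−1}) + 44·F_{m+2}·(G_{t+1}^5 − λ²·G_{t+1}) + 44·F_{m+2}·(−1)^{n+1}·(G_{n+t+1}^5 − λ²·G_{n+t+1}). -/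

import Mathlib

/-!
The summand $P(x) = G_{x-1} G_x G_{x+1} G_{x+2} G_{x+m}$ admits an alternating antidifference:
an explicit $H$ with $H(x) + H(x-1) = 220\,P(x)$, so the alternating sum telescopes to
$(-1)^{n+1} H(n+t) + H(t)$. The identity $H(x) + H(x-1) = 220\,P(x)$ is polynomial once every
term is expanded in $G_x, G_{x+1}, F_m, F_{m-1}$ (using $G_{x+m} = F_m G_{x+1} + F_{m-1} G_x$)
and $\lambda^2$ is replaced by $(G_{x+1}^2 - G_x G_{x+2})^2$, which does not depend on $x$.
-/

theorem Finset.sum_Icc_neg_one_pow_mul_add {R : Type*} [CommRing R] (f : ℕ → R) (n : ℕ) :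
    ∑ j ∈ Finset.Icc 1 n, (-1 : R) ^ (j - 1) * (f j + f (j - 1)) = (-1) ^ (n + 1) * f n + f 0 := by
  induction n with
  | zero => simp
  | succ n ih =>
    rw [Finset.sum_Icc_succ_top (by omega), ih, Nat.add_sub_cancel]
    ring

def IsGibonacci {R : Type*} [Add R] (G : ℤ → R) : Prop :=
  ∀ k, G (k + 2) = G (k + 1) + G k

namespace IsGibonacci

variable {R : Type*} [CommRing R] {G H : ℤ → R}

theorem add_one (hG : IsGibonacci G) (k : ℤ) : G (k + 1) = G k + G (k - 1) := by
  simpa [show k - 1 + 2 = k + 1 by ring] using hG (k - 1)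

theorem add_three (hG : IsGibonacci G) (k : ℤ) : G (k + 3) = G (k + 2) + G (k + 1) := by
  simpa [show k + 1 + 2 = k + 3 by ring, add_assoc] using hG (k + 1)

theorem sub_one (hG : IsGibonacci G) (k : ℤ) : G (k - 1) = G (k + 1) - G k := by
  rw [hG.add_one k]; ring

theorem sub_two (hG : IsGibonacci G) (k : ℤ) : G (k - 2) = G k - G (k - 1) := by
  have h := hG (k - 2)
  rw [show k - 2 + 2 = k by ring, show k - 2 + 1 = k - 1 by ring] at h
  rw [h]; ring

theorem sub_three (hG : IsGibonacci G) (k : ℤ) : G (k - 3) = G (k - 1) - G (k - 2) := by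
  have h := hG (k - 3)
  rw [show k - 3 + 2 = k - 1 by ring, show k - 3 + 1 = k - 2 by ring] at h
  rw [h]; ring

theorem ext (hG : IsGibonacci G) (hH : IsGibonacci H) (h0 : G 0 = H 0)
    (h1 : G 1 = H 1) : G = H := by
  suffices h : ∀ k, G k = H k ∧ G (k + 1) = H (k + 1) from funext fun k ↦ (h k).1
  intro k
  induction k using Int.induction_on with
  | zero => simpa using ⟨h0, h1⟩
  | succ i ih => exact ⟨ih.2, by rw [add_assoc, one_add_one_eq_two, hG, hH, ih.1, ih.2]⟩
  | pred i ih =>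
    refine ⟨?_, by simpa using ih.1⟩
    rw [hG.sub_one, hH.sub_one, ih.1, ih.2]

theorem add_eq_fib_mul_add (hG : IsGibonacci G) {F : ℤ → R} (hF : IsGibonacci F)
    (hF0 : F 0 = 0) (hF1 : F 1 = 1) (x m : ℤ) : G (x + m) = F m * G (x + 1) + F (m - 1) * G x := by
  have hshift : IsGibonacci fun m ↦ G (x + m) := fun k ↦ by simpa [add_assoc] using hG (x + k)
  have hcomb : IsGibonacci fun m ↦ F m * G (x + 1) + F (m - 1) * G x := fun k ↦ by
    simp only [hF k, show k + 2 - 1 = k + 1 by ring, add_sub_cancel_right, hF.add_one k]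
    ring
  have hFneg : F (-1) = 1 := by
    simpa [hF0, hF1] using hF.sub_one 0
  refine congrFun (hshift.ext hcomb ?_ ?_) m <;>
    simp [hF0, hF1, hFneg]

theorem cassini_sq (hG : IsGibonacci G) (k : ℤ) :
    (G (k + 1) ^ 2 - G k * G (k + 2)) ^ 2 = (G 1 ^ 2 - G 0 * G 2) ^ 2 := by
  -- the unsquared quantity changes sign from `k` to `k + 1`
  have hper : Function.Periodic (fun k ↦ (G (k + 1) ^ 2 - G k * G (k + 2)) ^ 2) 1 := fun k ↦ by
    simp only [add_assoc, one_add_one_eq_two, show (1 : ℤ) + 2 = 3 by norm_num, hG.add_three,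
      hG k]
    ring
  simpa using hper.int_mul_eq k

end IsGibonacci

section AntiDifference

variable {R : Type*} [CommRing R]

def fifthPowerAntidiff (F G : ℤ → R) (m x : ℤ) : R :=
  (F (m + 2) - F (m - 3)) *
      (G (x + 3) ^ 5 - 9 * G (x + 2) ^ 5 - 31 * G (x + 1) ^ 5 + 47 * G x ^ 5 - 7 * G (x - 1) ^ 5 -
        G (x - 2) ^ 5 + 44 * (G 1 ^ 2 - G 0 * G 2) ^ 2 * G (x - 1)) +
    44 * F (m + 2) * (G (x + 1) ^ 5 - (G 1 ^ 2 - G 0 * G 2) ^ 2 * G (x + 1))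

theorem fifthPowerAntidiff_add_sub_one {F G : ℤ → R} (hF : IsGibonacci F) (hF0 : F 0 = 0)
    (hF1 : F 1 = 1) (hG : IsGibonacci G) (m x : ℤ) :
    fifthPowerAntidiff F G m x + fifthPowerAntidiff F G m (x - 1) =
      220 * (G (x - 1) * G x * G (x + 1) * G (x + 2) * G (x + m)) := by
  simp only [fifthPowerAntidiff, show x - 1 + 3 = x + 2 by ring, show x - 1 + 2 = x + 1 by ring,
    sub_add_cancel, show x - 1 - 1 = x - 2 by ring, show x - 1 - 2 = x - 3 by ring]
  rw [← hG.cassini_sq x, hG.add_three x, hG x, hG.sub_three x, hG.sub_two x, hG.sub_one x,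
    hF m, hF.add_one m, hF.sub_three m, hF.sub_two m, hG.add_eq_fib_mul_add hF hF0 hF1 x m]
  ring

end AntiDifference

theorem alt_sum_products_five (F : ℤ → ℤ) (hF0 : F 0 = 0) (hF1 : F 1 = 1)
    (hF : ∀ k : ℤ, F (k + 2) = F (k + 1) + F k)
    (G : ℤ → ℤ) (hG : ∀ k : ℤ, G (k + 2) = G (k + 1) + G k) (n : ℕ) (t m : ℤ) :
    220 * ∑ j ∈ Finset.Icc 1 n,
        (-1 : ℤ) ^ (j - 1) * (G ((j : ℤ) + t - 1) * G ((j : ℤ) + t) * G ((j : ℤ) + t + 1) *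
          G ((j : ℤ) + t + 2) * G ((j : ℤ) + t + m)) =
      -((F (m + 2) - F (m - 3)) *
          (-((-1 : ℤ) ^ (n + 1) * G ((n : ℤ) + t + 3) ^ 5 + G (t + 3) ^ 5) +
            9 * ((-1 : ℤ) ^ (n + 1) * G ((n : ℤ) + t + 2) ^ 5 + G (t + 2) ^ 5))) -
        (F (m + 2) - F (m - 3)) *
          (31 * ((-1 : ℤ) ^ (n + 1) * G ((n : ℤ) + t + 1) ^ 5 + G (t + 1) ^ 5) -
            47 * ((-1 : ℤ) ^ (n + 1) * G ((n : ℤ) + t) ^ 5 + G t ^ 5)) -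
        (F (m + 2) - F (m - 3)) *
          (7 * ((-1 : ℤ) ^ (n + 1) * G ((n : ℤ) + t - 1) ^ 5 + G (t - 1) ^ 5) +
            ((-1 : ℤ) ^ (n + 1) * G ((n : ℤ) + t - 2) ^ 5 + G (t - 2) ^ 5)) +
        44 * (G 1 ^ 2 - G 0 * G 2) ^ 2 * (F (m + 2) - F (m - 3)) *
          ((-1 : ℤ) ^ (n + 1) * G ((n : ℤ) + t - 1) + G (t - 1)) +
        44 * F (m + 2) * (G (t + 1) ^ 5 - (G 1 ^ 2 - G 0 * G 2) ^ 2 * G (t + 1)) +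
        44 * F (m + 2) * (-1 : ℤ) ^ (n + 1) *
          (G ((n : ℤ) + t + 1) ^ 5 - (G 1 ^ 2 - G 0 * G 2) ^ 2 * G ((n : ℤ) + t + 1)) := by
  set H : ℕ → ℤ := fun j ↦ fifthPowerAntidiff F G m (j + t)
  have hsummand : ∀ j ∈ Finset.Icc 1 n,
      220 * ((-1 : ℤ) ^ (j - 1) * (G ((j : ℤ) + t - 1) * G ((j : ℤ) + t) * G ((j : ℤ) + t + 1) *
        G ((j : ℤ) + t + 2) * G ((j : ℤ) + t + m))) = (-1) ^ (j - 1) * (H j + H (j - 1)) := by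
    intro j hj
    have hcast : ((j - 1 : ℕ) : ℤ) + t = j + t - 1 := by
      rw [Nat.cast_sub (Finset.mem_Icc.mp hj).1]; ring
    simp only [H, hcast, fifthPowerAntidiff_add_sub_one hF hF0 hF1 hG]
    ring
  rw [Finset.mul_sum, Finset.sum_congr rfl hsummand, Finset.sum_Icc_neg_one_pow_mul_add]
  simp only [H, fifthPowerAntidiff, Nat.cast_zero, zero_add]
  ring
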